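/- The map phi from odd-diagonal-avoiding balanced 0/1 words of length 4n to Dyck words of length 4n (defined by first-even-return decomposition) is a bijection. -/

import Mathlib

def IsWord (l : List ℕ) : Prop := ∀ x ∈ l, x = 0 ∨ x = 1

def IsDyck (l : List ℕ) : Prop :=
  IsWord l ∧ l.count 1 = l.count 0 ∧ ∀ t, (l.take t).count 0 ≤ (l.take t).count 1

def IsPrimitiveExcursion (l : List ℕ) : Prop :=
  IsWord l ∧ l ≠ [] ∧ l.count 1 = l.count 0 ∧
    ∀ t, 0 < t → t < l.length → (l.take t).count 1 ≠ (l.take t).count 0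

def comp (l : List ℕ) : List ℕ := l.map (fun x => 1 - x)

def OddDiagAvoiding (l : List ℕ) : Prop :=
  ∀ t, t ≤ l.length → (l.take t).count 1 = (l.take t).count 0 → 4 ∣ t

/-! ### height -/

def ht (l : List ℕ) : ℤ := (l.count 1 : ℤ) - l.count 0

@[simp] lemma ht_nil : ht [] = 0 := by simp [ht]

lemma ht_append (a b : List ℕ) : ht (a ++ b) = ht a + ht b := by
  simp [ht, List.count_append]; ring

@[simp] lemma ht_single_one : ht [1] = 1 := by simp [ht]
@[simp] lemma ht_single_zero : ht [0] = -1 := by simp [ht]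

lemma ht_cons (x : ℕ) (l : List ℕ) : ht (x :: l) = ht [x] + ht l := by
  simpa using ht_append [x] l

lemma count_eq_iff (l : List ℕ) : l.count 1 = l.count 0 ↔ ht l = 0 := by
  unfold ht; omega

lemma ht_take_of_le {l : List ℕ} {t : ℕ} (h : l.length ≤ t) : ht (l.take t) = ht l := by
  rw [List.take_of_length_le h]

lemma word_count_len {l : List ℕ} (h : IsWord l) : l.count 1 + l.count 0 = l.length := by
  induction l with
  | nil => simp
  | cons x l ih =>
    have hx := h x (by simp)
    have : IsWord l := fun y hy => h y (by simp [hy])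
    have := ih this
    rcases hx with h0 | h1 <;> subst_vars <;> simp_all [List.count_cons] <;> omega

lemma isWord_take {l : List ℕ} (h : IsWord l) (t : ℕ) : IsWord (l.take t) :=
  fun x hx => h x (List.mem_of_mem_take hx)

lemma isWord_drop {l : List ℕ} (h : IsWord l) (t : ℕ) : IsWord (l.drop t) :=
  fun x hx => h x (List.mem_of_mem_drop hx)

lemma isWord_append {a b : List ℕ} (ha : IsWord a) (hb : IsWord b) : IsWord (a ++ b) := by
  intro x hx; rcases List.mem_append.1 hx with h | h; exacts [ha x h, hb x h]

lemma isWord_append_iff {a b : List ℕ} : IsWord (a ++ b) ↔ IsWord a ∧ IsWord b := by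
  constructor
  · intro h; exact ⟨fun x hx => h x (by simp [hx]), fun x hx => h x (by simp [hx])⟩
  · rintro ⟨ha, hb⟩; exact isWord_append ha hb

/-! ### comp -/

lemma isWord_comp (l : List ℕ) : IsWord (comp l) := by
  intro x hx
  simp only [comp, List.mem_map] at hx
  obtain ⟨y, -, rfl⟩ := hx
  omega

@[simp] lemma comp_length (l : List ℕ) : (comp l).length = l.length := by simp [comp]

lemma comp_append (a b : List ℕ) : comp (a ++ b) = comp a ++ comp b := by simp [comp]

lemma comp_take (l : List ℕ) (t : ℕ) : comp (l.take t) = (comp l).take t := by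
  simp [comp, List.map_take]

lemma comp_comp {l : List ℕ} (h : IsWord l) : comp (comp l) = l := by
  induction l with
  | nil => rfl
  | cons x l ih =>
    have hx := h x (by simp)
    have hl : IsWord l := fun y hy => h y (by simp [hy])
    rcases hx with rfl | rfl <;> simp [comp, ih hl] <;> simpa [comp] using ih hl

lemma ht_comp {l : List ℕ} (h : IsWord l) : ht (comp l) = -ht l := by
  induction l with
  | nil => simp [comp]
  | cons x l ih =>
    have hx := h x (by simp)
    have hl : IsWord l := fun y hy => h y (by simp [hy])
    have hih := ih hl
    have hc : comp (x :: l) = (1 - x) :: comp l := rfl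
    rcases hx with rfl | rfl
    · rw [hc, ht_cons, hih, ht_cons 0 l]; simp; ring
    · rw [hc, ht_cons, hih, ht_cons 1 l]; simp; ring

lemma head?_comp (l : List ℕ) : (comp l).head? = l.head?.map (fun x => 1 - x) := by
  simp [comp, List.head?_map]

/-! ### step lemma -/

lemma ht_take_step {l : List ℕ} (h : IsWord l) (t : ℕ) :
    ht (l.take (t+1)) = ht (l.take t) ∨ ht (l.take (t+1)) = ht (l.take t) + 1 ∨
      ht (l.take (t+1)) = ht (l.take t) - 1 := by
  by_cases hl : l.length ≤ t
  · left; rw [List.take_of_length_le hl, List.take_of_length_le (by omega)]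
  · push_neg at hl
    have : l.take (t+1) = l.take t ++ [l[t]] := by
      rw [List.take_succ]
      congr 1
      simp [List.getElem?_eq_getElem hl]
    rw [this, ht_append]
    rcases h l[t] (List.getElem_mem hl) with hx | hx <;> rw [hx] <;> simp <;> omega

lemma ht_comp_take {l : List ℕ} (h : IsWord l) (t : ℕ) :
    ht ((comp l).take t) = -ht (l.take t) := by
  rw [← comp_take, ht_comp (isWord_take h t)]

/-! ### first return -/

lemma exists_first_return {D : List ℕ} (hne : D ≠ []) (hb : ht D = 0) :
    ∃ f, 0 < f ∧ f ≤ D.length ∧ ht (D.take f) = 0 ∧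
      ∀ t, 0 < t → t < f → ht (D.take t) ≠ 0 := by
  have hex : ∃ f, 0 < f ∧ ht (D.take f) = 0 :=
    ⟨D.length, List.length_pos_iff.2 hne, by rw [List.take_length]; exact hb⟩
  classical
  set f := Nat.find hex with hfdef
  obtain ⟨hf0, hfb⟩ := Nat.find_spec hex
  have hmin : ∀ t, t < f → ¬(0 < t ∧ ht (D.take t) = 0) := fun t h => Nat.find_min hex h
  refine ⟨f, hf0, ?_, hfb, ?_⟩
  · by_contra hlen
    push_neg at hlen
    have := hmin D.length (by omega)
    simp only [not_and] at this
    exact this (List.length_pos_iff.2 hne) (by rw [List.take_length]; exact hb)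
  · intro t ht0 htf hc
    exact (hmin t htf) ⟨ht0, hc⟩

lemma first_return_unique {D : List ℕ} {r r' : ℕ}
    (h1 : 0 < r) (h2 : ht (D.take r) = 0) (h3 : ∀ t, 0 < t → t < r → ht (D.take t) ≠ 0)
    (h1' : 0 < r') (h2' : ht (D.take r') = 0)
    (h3' : ∀ t, 0 < t → t < r' → ht (D.take t) ≠ 0) : r = r' := by
  rcases lt_trichotomy r r' with h | h | h
  · exact absurd h2 (h3' r h1 h)
  · exact h
  · exact absurd h2' (h3 r' h1' h)

/-! ### Dyck via ht -/

lemma dyck_iff (l : List ℕ) : IsDyck l ↔ IsWord l ∧ ht l = 0 ∧ ∀ t, 0 ≤ ht (l.take t) := by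
  unfold IsDyck
  rw [count_eq_iff]
  refine and_congr_right fun _ => and_congr_right fun _ => forall_congr' fun t => ?_
  unfold ht; omega

/-! ### primitive excursions -/

lemma prim_ht_zero {U : List ℕ} (h : IsPrimitiveExcursion U) : ht U = 0 :=
  (count_eq_iff U).1 h.2.2.1

lemma prim_take_ne {U : List ℕ} (h : IsPrimitiveExcursion U) {t : ℕ} (h0 : 0 < t)
    (h1 : t < U.length) : ht (U.take t) ≠ 0 :=
  fun hc => h.2.2.2 t h0 h1 ((count_eq_iff _).2 hc)

lemma prim_length_two_le {U : List ℕ} (h : IsPrimitiveExcursion U) : 2 ≤ U.length := by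
  have h1 := word_count_len h.1
  have h2 := h.2.2.1
  have h3 : U.length ≠ 0 := fun hc => h.2.1 (List.length_eq_zero_iff.1 hc)
  omega

lemma head_cons_of_head? {U : List ℕ} {x : ℕ} (h : U.head? = some x) : U = x :: U.tail := by
  cases U with
  | nil => simp at h
  | cons y t => simp_all

lemma prim_interior_pos {U : List ℕ} (h : IsPrimitiveExcursion U) (hh : U.head? = some 1) :
    ∀ t, 0 < t → t < U.length → 1 ≤ ht (U.take t) := by
  intro t
  induction t with
  | zero => omega
  | succ s ih =>
    intro _ hlt
    rcases Nat.eq_zero_or_pos s with rfl | hs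
    · rw [head_cons_of_head? hh]
      simp
    · have h1 : 1 ≤ ht (U.take s) := ih hs (by omega)
      have h2 := ht_take_step h.1 s
      have h3 := prim_take_ne h (t := s + 1) (by omega) hlt
      omega

lemma prim_take_nonneg {U : List ℕ} (h : IsPrimitiveExcursion U) (hh : U.head? = some 1) :
    ∀ t, 0 ≤ ht (U.take t) := by
  intro t
  rcases Nat.eq_zero_or_pos t with rfl | ht0
  · simp
  · by_cases hlt : t < U.length
    · have := prim_interior_pos h hh t ht0 hlt; omega
    · rw [ht_take_of_le (by omega), prim_ht_zero h]

lemma prim_shape_one {U : List ℕ} (h : IsPrimitiveExcursion U) (hh : U.head? = some 1) :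
    ∃ X, U = 1 :: (X ++ [0]) ∧ (U.drop 1).dropLast = X ∧ IsWord X ∧ ht X = 0 ∧
      (∀ s, 0 ≤ ht (X.take s)) ∧ X.length = U.length - 2 := by
  have hlen := prim_length_two_le h
  have hne : U ≠ [] := h.2.1
  -- last element is 0
  have hdl : U.dropLast = U.take (U.length - 1) := List.dropLast_eq_take
  have hsplit : U.dropLast ++ [U.getLast hne] = U := List.dropLast_append_getLast hne
  have hht : ht U.dropLast + ht [U.getLast hne] = 0 := by
    rw [← ht_append, hsplit, prim_ht_zero h]
  have hpos : 1 ≤ ht U.dropLast := by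
    rw [hdl]; exact prim_interior_pos h hh _ (by omega) (by omega)
  have hlast : U.getLast hne = 0 := by
    rcases h.1 _ (List.getLast_mem hne) with h0 | h1
    · exact h0
    · rw [h1] at hht; simp at hht; omega
  rw [hlast] at hsplit
  have hU : U = 1 :: U.tail := head_cons_of_head? hh
  have hdllen : U.dropLast.length = U.length - 1 := List.length_dropLast
  obtain ⟨a, X, hDL⟩ : ∃ a X, U.dropLast = a :: X := by
    cases hDL : U.dropLast with
    | nil => rw [hDL] at hdllen; simp at hdllen; omega
    | cons a X => exact ⟨a, X, rfl⟩
  have hkey : (1 : ℕ) :: U.tail = a :: (X ++ [0]) := by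
    rw [← hU, ← hsplit, hDL]; rfl
  have ha : a = 1 := (List.cons.injEq _ _ _ _ ▸ hkey).1.symm
  have hT : U.tail = X ++ [0] := (List.cons.injEq _ _ _ _ ▸ hkey).2
  have hUshape : U = 1 :: (X ++ [0]) := by rw [hU, hT]
  have hdrop : (U.drop 1).dropLast = X := by
    rw [List.drop_one, hT, List.dropLast_concat]
  have hXword : IsWord X := fun x hx => h.1 x (by
    rw [hUshape]; simp only [List.mem_cons, List.mem_append]
    exact Or.inr (Or.inl hx))
  have hXlen : X.length = U.length - 2 := by
    have := congrArg List.length hUshape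
    simp at this; omega
  have hXht : ht X = 0 := by
    have := prim_ht_zero h
    rw [hUshape, ht_cons, ht_append] at this
    simp at this; omega
  refine ⟨X, hUshape, hdrop, hXword, hXht, ?_, hXlen⟩
  intro s
  by_cases hs : s ≤ X.length
  · have htake : U.take (1 + s) = 1 :: X.take s := by
      rw [hUshape, show (1 + s) = s + 1 by omega]
      simp only [List.take_succ_cons]
      congr 1
      rw [List.take_append, show s - X.length = 0 by omega]
      simp
    have hval : ht (U.take (1 + s)) = 1 + ht (X.take s) := by
      rw [htake, ht_cons]; simp
    rcases Nat.eq_zero_or_pos s with rfl | hs0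
    · simp [ht]
    · have : 1 ≤ ht (U.take (1 + s)) := prim_interior_pos h hh (1 + s) (by omega) (by omega)
      omega
  · rw [ht_take_of_le (by omega), hXht]

lemma prim_comp {U : List ℕ} (h : IsPrimitiveExcursion U) : IsPrimitiveExcursion (comp U) := by
  refine ⟨isWord_comp U, ?_, ?_, ?_⟩
  · intro hc
    have := congrArg List.length hc
    simp at this
    exact h.2.1 this
  · rw [count_eq_iff, ht_comp h.1, prim_ht_zero h]; ring
  · intro t h0 h1
    rw [comp_length] at h1
    rw [ne_eq, count_eq_iff, ht_comp_take h.1]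
    have := prim_take_ne h h0 h1
    omega

lemma prim_shape_zero {U : List ℕ} (h : IsPrimitiveExcursion U) (hh : U.head? = some 0) :
    ∃ Y, U = 0 :: (Y ++ [1]) ∧ (U.drop 1).dropLast = Y ∧ IsWord Y ∧ ht Y = 0 ∧
      (∀ s, ht (Y.take s) ≤ 0) ∧ Y.length = U.length - 2 := by
  have hc : (comp U).head? = some 1 := by rw [head?_comp, hh]; rfl
  obtain ⟨X, hshape, hdrop, hXword, hXht, hXpos, hXlen⟩ := prim_shape_one (prim_comp h) hc
  refine ⟨comp X, ?_, ?_, isWord_comp X, ?_, ?_, ?_⟩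
  · have : U = comp (comp U) := (comp_comp h.1).symm
    rw [this, hshape]
    show comp (1 :: (X ++ [0])) = _
    rw [show comp (1 :: (X ++ [0])) = (1-1) :: comp (X ++ [0]) from rfl, comp_append]
    simp [comp]
  · have hU2 : U = 0 :: (comp X ++ [1]) := by
      have : U = comp (comp U) := (comp_comp h.1).symm
      rw [this, hshape]
      show comp (1 :: (X ++ [0])) = _
      rw [show comp (1 :: (X ++ [0])) = (1-1) :: comp (X ++ [0]) from rfl, comp_append]
      simp [comp]
    rw [hU2]
    simp
  · rw [ht_comp hXword, hXht]; ring
  · intro s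
    rw [ht_comp_take hXword]
    have := hXpos s
    omega
  · rw [comp_length, hXlen, comp_length]

/-! ### decomposition -/

lemma decomp {P : List ℕ} (hw : IsWord P) (hb : ht P = 0) (hne : P ≠ []) :
    ∃ U V, P = U ++ V ∧ IsPrimitiveExcursion U ∧ IsWord V ∧ ht V = 0 := by
  obtain ⟨f, hf0, hfle, hfb, hfmin⟩ := exists_first_return hne hb
  refine ⟨P.take f, P.drop f, (List.take_append_drop f P).symm, ⟨isWord_take hw f, ?_, ?_, ?_⟩,
    isWord_drop hw f, ?_⟩
  · intro hc
    have hl : (P.take f).length = f := by rw [List.length_take]; omega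
    rw [hc] at hl; simp at hl; omega
  · exact (count_eq_iff _).2 hfb
  · intro t h0 h1
    rw [List.length_take] at h1
    rw [List.take_take, Nat.min_eq_left (by omega), ne_eq, count_eq_iff]
    exact hfmin t h0 (by omega)
  · have := ht_append (P.take f) (P.drop f)
    rw [List.take_append_drop] at this
    omega

lemma odd_decomp {P U V : List ℕ} (hodd : OddDiagAvoiding P) (hP : P = U ++ V)
    (hU : IsPrimitiveExcursion U) : 4 ∣ U.length ∧ OddDiagAvoiding V := by
  have hdU : 4 ∣ U.length := by
    refine hodd U.length (by rw [hP]; simp) ?_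
    rw [hP, List.take_left]
    exact hU.2.2.1
  refine ⟨hdU, fun t hle hcnt => ?_⟩
  have h4 : 4 ∣ U.length + t := by
    refine hodd (U.length + t) (by rw [hP]; simp; omega) ?_
    rw [hP, List.take_append, List.take_of_length_le (by omega),
      show U.length + t - U.length = t by omega]
    have h1 := hU.2.2.1
    simp [List.count_append]
    omega
  omega

lemma odd_append {U V : List ℕ} (hU : IsPrimitiveExcursion U) (hdivU : 4 ∣ U.length)
    (hV : OddDiagAvoiding V) : OddDiagAvoiding (U ++ V) := by
  intro t hle hcnt
  rw [count_eq_iff, List.take_append, ht_append] at hcnt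
  by_cases htU : t < U.length
  · rw [show t - U.length = 0 by omega] at hcnt
    simp at hcnt
    rcases Nat.eq_zero_or_pos t with rfl | h0
    · exact dvd_zero 4
    · exact absurd hcnt (prim_take_ne hU h0 htU)
  · rw [ht_take_of_le (by omega), prim_ht_zero hU] at hcnt
    simp at hcnt
    have h4 : 4 ∣ t - U.length := by
      refine hV (t - U.length) ?_ ((count_eq_iff _).2 hcnt)
      rw [List.length_append] at hle; omega
    omega

lemma odd_length {P : List ℕ} (hodd : OddDiagAvoiding P) (hb : P.count 1 = P.count 0) :
    4 ∣ P.length :=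
  hodd P.length le_rfl (by rw [List.take_length]; exact hb)

lemma prim_take_fr {D : List ℕ} (hw : IsWord D) {f : ℕ} (hf0 : 0 < f) (hfle : f ≤ D.length)
    (hfb : ht (D.take f) = 0) (hfmin : ∀ t, 0 < t → t < f → ht (D.take t) ≠ 0) :
    IsPrimitiveExcursion (D.take f) := by
  refine ⟨isWord_take hw f, ?_, (count_eq_iff _).2 hfb, ?_⟩
  · intro hc
    have hl : (D.take f).length = f := by rw [List.length_take]; omega
    rw [hc] at hl; simp at hl; omega
  · intro t h0 h1
    rw [List.length_take] at h1
    rw [List.take_take, Nat.min_eq_left (by omega), ne_eq, count_eq_iff]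
    exact hfmin t h0 (by omega)

lemma prim_below {Z : List ℕ} (hw : IsWord Z) (hb : ht Z = 0) (hpos : ∀ s, 0 ≤ ht (Z.take s)) :
    IsPrimitiveExcursion (0 :: (comp Z ++ [1])) := by
  have hword : IsWord (0 :: (comp Z ++ [1])) := by
    intro x hx
    simp only [List.mem_cons, List.mem_append, List.mem_singleton] at hx
    rcases hx with rfl | hx | hx
    · left; rfl
    · exact isWord_comp Z x hx
    · simp at hx; omega
  refine ⟨hword, by simp, ?_, ?_⟩
  · rw [count_eq_iff, ht_cons, ht_append, ht_comp hw, hb]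
    simp
  · intro t h0 h1
    have h1' : t < Z.length + 2 := by simp at h1; omega
    obtain ⟨s, rfl⟩ : ∃ s, t = s + 1 := ⟨t - 1, by omega⟩
    rw [ne_eq, count_eq_iff, List.take_succ_cons, ht_cons]
    rw [List.take_append, show s - (comp Z).length = 0 by rw [comp_length]; omega]
    simp only [List.take_zero, List.append_nil]
    rw [ht_comp_take hw]
    have := hpos s
    simp only [ht_single_zero]
    omega

/-! ### first-return values -/

lemma fr_above' {U R : List ℕ} (hU : IsPrimitiveExcursion U) :
    ht ((U ++ R).take U.length) = 0 ∧
      ∀ t, 0 < t → t < U.length → ht ((U ++ R).take t) ≠ 0 := by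
  constructor
  · rw [List.take_left, prim_ht_zero hU]
  · intro t h0 h1
    rw [List.take_append, show t - U.length = 0 by omega]
    simp only [List.take_zero, List.append_nil]
    exact prim_take_ne hU h0 h1

lemma fr_below' {M R : List ℕ} (hM : ∀ t, 0 ≤ ht (M.take t)) (hMb : ht M = 0) :
    ht ((1 :: (M ++ 0 :: R)).take (M.length + 2)) = 0 ∧
      ∀ t, 0 < t → t < M.length + 2 → ht ((1 :: (M ++ 0 :: R)).take t) ≠ 0 := by
  constructor
  · rw [show M.length + 2 = (M.length + 1) + 1 by omega, List.take_succ_cons, ht_cons]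
    rw [List.take_append, List.take_of_length_le (by omega),
      show M.length + 1 - M.length = 1 by omega]
    rw [ht_append, hMb]
    simp [List.take_succ_cons, ht]
  · intro t h0 h1
    obtain ⟨s, rfl⟩ : ∃ s, t = s + 1 := ⟨t - 1, by omega⟩
    rw [List.take_succ_cons, ht_cons]
    rw [List.take_append, show s - M.length = 0 by omega]
    simp only [List.take_zero, List.append_nil, ht_single_one]
    have := hM s
    omega

/-! ### phi maps to Dyck -/

lemma phi_dyck (phi : List ℕ → List ℕ)
    (h_nil : phi [] = [])
    (h_above : ∀ U V : List ℕ, IsPrimitiveExcursion U → U.head? = some 1 →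
      phi (U ++ V) = 1 :: (U.drop 1).dropLast ++ 0 :: phi V)
    (h_below : ∀ U V : List ℕ, IsPrimitiveExcursion U → U.head? = some 0 →
      phi (U ++ V) = 1 :: phi V ++ 0 :: comp ((U.drop 1).dropLast)) :
    ∀ N P, P.length = N → IsWord P → ht P = 0 →
      (IsWord (phi P) ∧ ht (phi P) = 0 ∧ (∀ t, 0 ≤ ht ((phi P).take t))) ∧
        (phi P).length = P.length := by
  intro N
  induction N using Nat.strong_induction_on with
  | _ N ih =>
    intro P hlen hw hb
    by_cases hP : P = []
    · subst hP
      rw [h_nil]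
      exact ⟨⟨fun x hx => absurd hx (List.not_mem_nil), rfl, fun t => by simp⟩, rfl⟩
    · obtain ⟨U, V, hPUV, hU, hVw, hVb⟩ := decomp hw hb hP
      have hUne := hU.2.1
      have hU2 := prim_length_two_le hU
      have hPlen : P.length = U.length + V.length := by rw [hPUV, List.length_append]
      have hVlen : V.length < N := by omega
      obtain ⟨⟨hDw, hDb, hDpos⟩, hDlen⟩ := ih V.length hVlen V rfl hVw hVb
      obtain ⟨u, T, hUu⟩ : ∃ u T, U = u :: T := by
        cases U with
        | nil => exact absurd rfl hUne
        | cons u T => exact ⟨u, T, rfl⟩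
      have hhead : U.head? = some u := by rw [hUu]; rfl
      rcases hU.1 u (by rw [hUu]; simp) with rfl | rfl
      · -- below case
        obtain ⟨Y, hUsh, hdrop, hYw, hYb, hYneg, hYlen⟩ := prim_shape_zero hU hhead
        have hphi : phi P = 1 :: (phi V ++ 0 :: comp Y) := by
          rw [hPUV, h_below U V hU hhead, hdrop]
          simp
        refine ⟨⟨?_, ?_, ?_⟩, ?_⟩
        · rw [hphi]
          intro x hx
          simp only [List.mem_cons, List.mem_append] at hx
          rcases hx with rfl | hx | (rfl | hx)
          · right; rfl
          · exact hDw x hx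
          · left; rfl
          · exact isWord_comp Y x hx
        · rw [hphi, ht_cons, ht_append, ht_cons 0 (comp Y), ht_comp hYw, hYb, hDb]
          simp
        · intro t
          rw [hphi]
          rcases Nat.eq_zero_or_pos t with rfl | ht0
          · simp
          · obtain ⟨s, rfl⟩ : ∃ s, t = s + 1 := ⟨t - 1, by omega⟩
            rw [List.take_succ_cons, ht_cons, List.take_append, ht_append]
            have h1 := hDpos s
            have h2 : -1 ≤ ht ((0 :: comp Y).take (s - (phi V).length)) := by
              rcases Nat.eq_zero_or_pos (s - (phi V).length) with he | he
              · rw [he]; simp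
              · obtain ⟨r, hr⟩ : ∃ r, s - (phi V).length = r + 1 :=
                  ⟨s - (phi V).length - 1, by omega⟩
                rw [hr, List.take_succ_cons, ht_cons, ht_comp_take hYw]
                have := hYneg r
                simp only [ht_single_zero]
                omega
            simp only [ht_single_one]
            omega
        · rw [hphi]
          simp only [List.length_cons, List.length_append, comp_length]
          have hUlen : U.length = Y.length + 2 := by
            have := congrArg List.length hUsh
            simp at this; omega
          omega
      · -- above case
        obtain ⟨X, hUsh, hdrop, hXw, hXb, hXpos, hXlen⟩ := prim_shape_one hU hhead
        have hphi : phi P = U ++ phi V := by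
          rw [hPUV, h_above U V hU hhead, hdrop]
          rw [hUsh]
          simp
        refine ⟨⟨?_, ?_, ?_⟩, ?_⟩
        · rw [hphi]; exact isWord_append hU.1 hDw
        · rw [hphi, ht_append, prim_ht_zero hU, hDb]; simp
        · intro t
          rw [hphi, List.take_append, ht_append]
          have h1 := prim_take_nonneg hU hhead t
          have h2 := hDpos (t - U.length)
          omega
        · rw [hphi]; simp [hDlen]; omega

/-! ### surjectivity -/

lemma phi_surj (phi : List ℕ → List ℕ)
    (h_nil : phi [] = [])
    (h_above : ∀ U V : List ℕ, IsPrimitiveExcursion U → U.head? = some 1 →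
      phi (U ++ V) = 1 :: (U.drop 1).dropLast ++ 0 :: phi V)
    (h_below : ∀ U V : List ℕ, IsPrimitiveExcursion U → U.head? = some 0 →
      phi (U ++ V) = 1 :: phi V ++ 0 :: comp ((U.drop 1).dropLast)) :
    ∀ N D, D.length = N → IsWord D → ht D = 0 → (∀ t, 0 ≤ ht (D.take t)) → 4 ∣ D.length →
      ∃ P, IsWord P ∧ ht P = 0 ∧ OddDiagAvoiding P ∧ P.length = D.length ∧ phi P = D := by
  intro N
  induction N using Nat.strong_induction_on with
  | _ N ih =>
    intro D hlen hw hb hpos hdiv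
    by_cases hD : D = []
    · subst hD
      refine ⟨[], fun x hx => absurd hx (List.not_mem_nil), by simp, ?_, by simp, h_nil⟩
      intro t h _
      simp at h
      omega
    · obtain ⟨f, hf0, hfle, hfb, hfmin⟩ := exists_first_return hD hb
      have hE : IsPrimitiveExcursion (D.take f) := prim_take_fr hw hf0 hfle hfb hfmin
      have hElen : (D.take f).length = f := by rw [List.length_take]; omega
      have hf2 : 2 ≤ f := by have := prim_length_two_le hE; omega
      -- f is even
      have hfe : f % 2 = 0 := by
        have h1 := word_count_len (isWord_take hw f)
        have h3 : (D.take f).count 1 = (D.take f).count 0 := (count_eq_iff _).2 hfb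
        omega
      -- head is 1
      have hhead : (D.take f).head? = some 1 := by
        obtain ⟨d, T, hDdT⟩ : ∃ d T, D = d :: T := by
          cases D with
          | nil => exact absurd rfl hD
          | cons d T => exact ⟨d, T, rfl⟩
        have hd : d = 1 := by
          rcases hw d (by rw [hDdT]; simp) with rfl | rfl
          · exfalso
            have := hpos 1
            rw [hDdT, List.take_succ_cons, List.take_zero] at this
            simp at this
          · rfl
        obtain ⟨m, rfl⟩ : ∃ m, f = m + 1 := ⟨f - 1, by omega⟩
        rw [hDdT, List.take_succ_cons, hd]
        rfl
      -- the rest Z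
      set Z := D.drop f with hZ
      have hZw : IsWord Z := isWord_drop hw f
      have hZb : ht Z = 0 := by
        have h1 := ht_append (D.take f) (D.drop f)
        rw [List.take_append_drop, ← hZ] at h1
        omega
      have hZpos : ∀ t, 0 ≤ ht (Z.take t) := by
        intro t
        have h1 := hpos (f + t)
        rw [List.take_add, ht_append, hfb, ← hZ] at h1
        simpa using h1
      have hZlen : Z.length = D.length - f := by rw [hZ, List.length_drop]
      by_cases h4 : 4 ∣ f
      · -- first return at multiple of 4
        obtain ⟨V, hVw, hVb, hVodd, hVlen, hVphi⟩ :=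
          ih Z.length (by omega) Z rfl hZw hZb hZpos (by rw [hZlen]; omega)
        obtain ⟨X, hEsh, hEdrop, -, -, -, -⟩ := prim_shape_one hE hhead
        refine ⟨D.take f ++ V, isWord_append hE.1 hVw, ?_, ?_, ?_, ?_⟩
        · rw [ht_append, prim_ht_zero hE, hVb]; ring
        · exact odd_append hE (by rw [hElen]; exact h4) hVodd
        · rw [List.length_append, hElen]; omega
        · rw [h_above _ V hE hhead, hEdrop, hVphi]
          conv_rhs => rw [← List.take_append_drop f D, ← hZ]
          rw [hEsh]
          simp
      · -- first return ≡ 2 mod 4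
        have hf4 : f % 4 = 2 := by omega
        obtain ⟨W, hEsh, hEdrop, hWw, hWb, hWpos, hWlen⟩ := prim_shape_one hE hhead
        rw [hElen] at hWlen
        obtain ⟨V, hVw, hVb, hVodd, hVlen, hVphi⟩ :=
          ih W.length (by omega) W rfl hWw hWb hWpos (by omega)
        have hUprim : IsPrimitiveExcursion (0 :: (comp Z ++ [1])) := prim_below hZw hZb hZpos
        have hUdrop : (((0 : ℕ) :: (comp Z ++ [1])).drop 1).dropLast = comp Z := by
          rw [List.drop_one]
          exact List.dropLast_concat ..
        refine ⟨(0 :: (comp Z ++ [1])) ++ V, isWord_append hUprim.1 hVw, ?_, ?_, ?_, ?_⟩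
        · rw [ht_append, prim_ht_zero hUprim, hVb]; ring
        · refine odd_append hUprim ?_ hVodd
          have : ((0 : ℕ) :: (comp Z ++ [1])).length = Z.length + 2 := by simp
          rw [this]
          omega
        · have h5 : (((0 : ℕ) :: (comp Z ++ [1])) ++ V).length = Z.length + 2 + V.length := by
            simp; omega
          rw [h5]
          omega
        · rw [h_below _ V hUprim rfl, hUdrop, hVphi, comp_comp hZw]
          conv_rhs => rw [← List.take_append_drop f D, ← hZ]
          rw [hEsh]
          simp

/-! ### injectivity -/

lemma phi_inj (phi : List ℕ → List ℕ)
    (h_nil : phi [] = [])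
    (h_above : ∀ U V : List ℕ, IsPrimitiveExcursion U → U.head? = some 1 →
      phi (U ++ V) = 1 :: (U.drop 1).dropLast ++ 0 :: phi V)
    (h_below : ∀ U V : List ℕ, IsPrimitiveExcursion U → U.head? = some 0 →
      phi (U ++ V) = 1 :: phi V ++ 0 :: comp ((U.drop 1).dropLast)) :
    ∀ N P P', P.length = N →
      IsWord P → ht P = 0 → OddDiagAvoiding P →
      IsWord P' → ht P' = 0 → OddDiagAvoiding P' →
      phi P = phi P' → P = P' := by
  intro N
  induction N using Nat.strong_induction_on with
  | _ N ih =>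
    intro P P' hlen hw hb ho hw' hb' ho' heq
    have hA := phi_dyck phi h_nil h_above h_below P.length P rfl hw hb
    have hA' := phi_dyck phi h_nil h_above h_below P'.length P' rfl hw' hb'
    have hlen2 : P.length = P'.length := by rw [← hA.2, ← hA'.2, heq]
    by_cases hP : P = []
    · subst hP
      simp at hlen2
      exact (List.length_eq_zero_iff.1 hlen2.symm).symm
    · have hP' : P' ≠ [] := by
        intro hc; subst hc; simp at hlen2; exact hP hlen2
      obtain ⟨U, V, hPUV, hU, hVw, hVb⟩ := decomp hw hb hP
      obtain ⟨U', V', hPUV', hU', hVw', hVb'⟩ := decomp hw' hb' hP'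
      obtain ⟨hdU, hoV⟩ := odd_decomp ho hPUV hU
      obtain ⟨hdU', hoV'⟩ := odd_decomp ho' hPUV' hU'
      obtain ⟨⟨hVDw, hVDb, hVDpos⟩, hVDlen⟩ :=
        phi_dyck phi h_nil h_above h_below V.length V rfl hVw hVb
      obtain ⟨⟨hVDw', hVDb', hVDpos'⟩, hVDlen'⟩ :=
        phi_dyck phi h_nil h_above h_below V'.length V' rfl hVw' hVb'
      have hU2 := prim_length_two_le hU
      have hU2' := prim_length_two_le hU'
      have hPl : P.length = U.length + V.length := by rw [hPUV, List.length_append]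
      have hPl' : P'.length = U'.length + V'.length := by rw [hPUV', List.length_append]
      have hdP : 4 ∣ P.length := odd_length ho ((count_eq_iff P).2 hb)
      have hdP' : 4 ∣ P'.length := odd_length ho' ((count_eq_iff P').2 hb')
      have hdV : 4 ∣ V.length := by omega
      have hdV' : 4 ∣ V'.length := by omega
      obtain ⟨u, T, hUu⟩ : ∃ u T, U = u :: T := by
        cases U with
        | nil => exact absurd rfl hU.2.1
        | cons u T => exact ⟨u, T, rfl⟩
      obtain ⟨u', T', hUu'⟩ : ∃ u' T', U' = u' :: T' := by
        cases U' with
        | nil => exact absurd rfl hU'.2.1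
        | cons u' T' => exact ⟨u', T', rfl⟩
      have hhead : U.head? = some u := by rw [hUu]; rfl
      have hhead' : U'.head? = some u' := by rw [hUu']; rfl
      rcases hU.1 u (by rw [hUu]; simp) with rfl | rfl <;>
        rcases hU'.1 u' (by rw [hUu']; simp) with rfl | rfl
      · -- both below
        obtain ⟨Y, hUsh, hdrop, hYw, hYb, hYneg, hYlen⟩ := prim_shape_zero hU hhead
        obtain ⟨Y', hUsh', hdrop', hYw', hYb', hYneg', hYlen'⟩ := prim_shape_zero hU' hhead'
        have e1 : phi P = 1 :: (phi V ++ 0 :: comp Y) := by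
          rw [hPUV, h_below U V hU hhead, hdrop]; simp
        have e2 : phi P = 1 :: (phi V' ++ 0 :: comp Y') := by
          rw [heq, hPUV', h_below U' V' hU' hhead', hdrop']; simp
        have f1 := fr_below' hVDpos hVDb (R := comp Y)
        have f2 := fr_below' hVDpos' hVDb' (R := comp Y')
        rw [← e1] at f1
        rw [← e2] at f2
        have hr : (phi V).length + 2 = (phi V').length + 2 :=
          first_return_unique (by omega) f1.1 f1.2 (by omega) f2.1 f2.2
        have hkey : phi V ++ 0 :: comp Y = phi V' ++ 0 :: comp Y' := by
          have := e1.symm.trans e2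
          exact List.cons_injective this
        obtain ⟨hphiVV, htail⟩ := List.append_inj hkey (by omega)
        have hYY : Y = Y' := by
          have h1 : comp Y = comp Y' := List.cons_injective htail
          rw [← comp_comp hYw, ← comp_comp hYw', h1]
        have hVV : V = V' := by
          refine ih V.length (by omega) V V' rfl hVw hVb hoV hVw' hVb' hoV' ?_
          exact hphiVV
        rw [hPUV, hPUV', hUsh, hUsh', hYY, hVV]
      · -- P below, P' above : contradiction
        obtain ⟨Y, hUsh, hdrop, hYw, hYb, hYneg, hYlen⟩ := prim_shape_zero hU hhead
        obtain ⟨X', hUsh', hdrop', hXw', hXb', hXpos', hXlen'⟩ := prim_shape_one hU' hhead'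
        have e1 : phi P = 1 :: (phi V ++ 0 :: comp Y) := by
          rw [hPUV, h_below U V hU hhead, hdrop]; simp
        have e2 : phi P = U' ++ phi V' := by
          rw [heq, hPUV', h_above U' V' hU' hhead', hdrop']
          rw [hUsh']; simp
        have f1 := fr_below' hVDpos hVDb (R := comp Y)
        have f2 := fr_above' (R := phi V') hU'
        rw [← e1] at f1
        rw [← e2] at f2
        have hr : (phi V).length + 2 = U'.length :=
          first_return_unique (by omega) f1.1 f1.2 (by omega) f2.1 f2.2
        rw [hVDlen] at hr
        omega
      · -- P above, P' below : contradiction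
        obtain ⟨X, hUsh, hdrop, hXw, hXb, hXpos, hXlen⟩ := prim_shape_one hU hhead
        obtain ⟨Y', hUsh', hdrop', hYw', hYb', hYneg', hYlen'⟩ := prim_shape_zero hU' hhead'
        have e1 : phi P = U ++ phi V := by
          rw [hPUV, h_above U V hU hhead, hdrop]
          rw [hUsh]; simp
        have e2 : phi P = 1 :: (phi V' ++ 0 :: comp Y') := by
          rw [heq, hPUV', h_below U' V' hU' hhead', hdrop']; simp
        have f1 := fr_above' (R := phi V) hU
        have f2 := fr_below' hVDpos' hVDb' (R := comp Y')
        rw [← e1] at f1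
        rw [← e2] at f2
        have hr : U.length = (phi V').length + 2 :=
          first_return_unique (by omega) f1.1 f1.2 (by omega) f2.1 f2.2
        rw [hVDlen'] at hr
        omega
      · -- both above
        obtain ⟨X, hUsh, hdrop, hXw, hXb, hXpos, hXlen⟩ := prim_shape_one hU hhead
        obtain ⟨X', hUsh', hdrop', hXw', hXb', hXpos', hXlen'⟩ := prim_shape_one hU' hhead'
        have e1 : phi P = U ++ phi V := by
          rw [hPUV, h_above U V hU hhead, hdrop]
          rw [hUsh]; simp
        have e2 : phi P = U' ++ phi V' := by
          rw [heq, hPUV', h_above U' V' hU' hhead', hdrop']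
          rw [hUsh']; simp
        have f1 := fr_above' (R := phi V) hU
        have f2 := fr_above' (R := phi V') hU'
        rw [← e1] at f1
        rw [← e2] at f2
        have hr : U.length = U'.length :=
          first_return_unique (by omega) f1.1 f1.2 (by omega) f2.1 f2.2
        have hUU : U = U' := by
          have h1 : (phi P).take U.length = U := by rw [e1, List.take_left]
          have h2 : (phi P).take U'.length = U' := by rw [e2, List.take_left]
          rw [← h1, ← h2, hr]
        have hphiVV : phi V = phi V' := by
          have h1 : (phi P).drop U.length = phi V := by rw [e1, List.drop_left]
          have h2 : (phi P).drop U'.length = phi V' := by rw [e2, List.drop_left]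
          rw [← h1, ← h2, hr]
        have hVV : V = V' :=
          ih V.length (by omega) V V' rfl hVw hVb hoV hVw' hVb' hoV' hphiVV
        rw [hPUV, hPUV', hUU, hVV]

theorem phi_bijective (n : ℕ) (phi : List ℕ → List ℕ)
    (h_nil : phi [] = [])
    (h_above : ∀ U V : List ℕ, IsPrimitiveExcursion U → U.head? = some 1 →
      phi (U ++ V) = 1 :: (U.drop 1).dropLast ++ 0 :: phi V)
    (h_below : ∀ U V : List ℕ, IsPrimitiveExcursion U → U.head? = some 0 →
      phi (U ++ V) = 1 :: phi V ++ 0 :: comp ((U.drop 1).dropLast)) :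
    Set.BijOn phi
      {P : List ℕ | IsWord P ∧ P.count 1 = P.count 0 ∧
        OddDiagAvoiding P ∧ P.length = 4 * n}
      {D : List ℕ | IsDyck D ∧ D.length = 4 * n} := by
  refine ⟨?_, ?_, ?_⟩
  · rintro P ⟨hw, hc, ho, hlen⟩
    obtain ⟨⟨hDw, hDb, hDpos⟩, hDlen⟩ :=
      phi_dyck phi h_nil h_above h_below P.length P rfl hw ((count_eq_iff P).1 hc)
    refine ⟨⟨hDw, (count_eq_iff _).2 hDb, fun t => ?_⟩, by omega⟩
    have := hDpos t
    unfold ht at this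
    omega
  · rintro P ⟨hw, hc, ho, hlen⟩ P' ⟨hw', hc', ho', hlen'⟩ heq
    exact phi_inj phi h_nil h_above h_below P.length P P' rfl hw ((count_eq_iff P).1 hc) ho
      hw' ((count_eq_iff P').1 hc') ho' heq
  · rintro D ⟨⟨hDw, hDc, hDpos⟩, hDlen⟩
    obtain ⟨P, hw, hb, ho, hlenP, hphi⟩ :=
      phi_surj phi h_nil h_above h_below D.length D rfl hDw ((count_eq_iff D).1 hDc)
        (fun t => by have := hDpos t; unfold ht; omega) (by rw [hDlen]; exact ⟨n, rfl⟩)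
    exact ⟨P, ⟨hw, (count_eq_iff P).2 hb, ho, by omega⟩, hphi⟩
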